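/- Let E be a finite ground set, M a matroid on E with independence predicate Indep, and f : 2^E → ℝ a monotone submodular set function with f(∅) ≥ 0. Suppose x_1, …, x_k is a greedy sequence: writing S_i = {x_1, …, x_i} (with S_0 = ∅), each S_i is independent, for each i the element x_i maximizes the marginal gain f(S_{i−1} ∪ {x}) − f(S_{i−1}) over all x ∉ S_{i−1} with S_{i−1} ∪ {x} independent, and S_k is a maximal independent set (no x ∉ S_k has S_k ∪ {x} independent). Then for every independent set O of the matroid, f(S_k) ≥ (1/2)·f(O). -/

import Mathlib

/-!
Call a greedy step `i < k` available to `e` if `e` could still be added to `S i`. If an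
independent set `A` were larger than the number `m` of steps available to its elements, then no
element of `A` could be added to `S m` (availability is downward closed in `i`), contradicting
the augmentation axiom since `|S m| = m`. This is Hall's condition, so the elements `o` of `O`
can be charged to distinct available steps `i`. At such a step the greedy choice and
submodularity bound the gain of `o` over `S k` by the gain `f (S (i+1)) - f (S i)`, hence
`∑ o ∈ O, (f (S k ∪ {o}) - f (S k)) ≤ f (S k) - f ∅`. Submodularity and monotonicity then give
`f O ≤ f (S k ∪ O) ≤ 2 f (S k) - f ∅`.
-/

open Finset

section

variable {E : Type*} [DecidableEq E]

theorem le_add_sum_marginal_of_submodular {f : Finset E → ℝ}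
    (hsub : ∀ A B : Finset E, A ⊆ B → ∀ i ∉ B, f (insert i A) - f A ≥ f (insert i B) - f B)
    (A B : Finset E) :
    f (A ∪ B) ≤ f A + ∑ b ∈ B, (f (insert b A) - f A) := by
  induction B using Finset.induction_on with
  | empty => simp
  | @insert b B hb ih =>
    rw [union_insert, sum_insert hb]
    by_cases hbAB : b ∈ A ∪ B
    · have hmarg : f (insert b A) - f A ≥ f (insert b (A ∪ B)) - f (A ∪ B) := by
        rcases mem_union.1 hbAB with hbA | hbB
        · simp [insert_eq_of_mem hbA, insert_eq_of_mem hbAB]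
        · exact absurd hbB hb
      linarith
    · linarith [hsub A (A ∪ B) subset_union_left b hbAB]

def CanAugment (Indep : Finset E → Prop) (S : Finset E) (e : E) : Prop :=
  e ∉ S ∧ Indep (insert e S)

theorem CanAugment.anti {Indep : Finset E → Prop}
    (hI2 : ∀ A B : Finset E, A ⊆ B → Indep B → Indep A) {S T : Finset E} {e : E}
    (hST : S ⊆ T) (h : CanAugment Indep T e) : CanAugment Indep S e :=
  ⟨fun heS => h.1 (hST heS), hI2 _ _ (insert_subset_insert e hST) h.2⟩

theorem card_le_card_of_forall_not_canAugment {Indep : Finset E → Prop}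
    (hI3 : ∀ A B : Finset E, Indep A → Indep B → A.card < B.card →
      ∃ e ∈ B, e ∉ A ∧ Indep (insert e A))
    {A S : Finset E} (hA : Indep A) (hS : Indep S) (h : ∀ e ∈ A, ¬ CanAugment Indep S e) :
    A.card ≤ S.card := by
  by_contra! hlt
  obtain ⟨e, heA, heS, hindep⟩ := hI3 S A hS hA hlt
  exact h e heA ⟨heS, hindep⟩

section GreedyChain

variable {Indep : Finset E → Prop} {k : ℕ} {x : ℕ → E} {S : ℕ → Finset E}

theorem greedy_chain_mono (hSsucc : ∀ i < k, S (i + 1) = insert (x (i + 1)) (S i))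
    {i j : ℕ} (hij : i ≤ j) (hjk : j ≤ k) : S i ⊆ S j := by
  induction j, hij using Nat.le_induction with
  | base => exact subset_rfl
  | succ j _ ih =>
    rw [hSsucc j (by omega)]
    exact (ih (by omega)).trans (subset_insert _ _)

theorem card_greedy_chain (hS0 : S 0 = ∅)
    (hSsucc : ∀ i < k, S (i + 1) = insert (x (i + 1)) (S i))
    (hnew : ∀ i < k, x (i + 1) ∉ S i) {i : ℕ} (hik : i ≤ k) : (S i).card = i := by
  induction i with
  | zero => simp [hS0]
  | succ i ih =>
    rw [hSsucc i (by omega), card_insert_of_notMem (hnew i (by omega)), ih (by omega)]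

open Classical in
noncomputable def augmentTimes (Indep : Finset E → Prop) (S : ℕ → Finset E) (k : ℕ) (e : E) :
    Finset ℕ :=
  (range k).filter fun i => CanAugment Indep (S i) e

theorem mem_augmentTimes {i : ℕ} {e : E} :
    i ∈ augmentTimes Indep S k e ↔ i < k ∧ CanAugment Indep (S i) e := by
  simp [augmentTimes]

theorem augmentTimes_subset_range {e : E} : augmentTimes Indep S k e ⊆ range k :=
  fun _ hi => mem_range.2 (mem_augmentTimes.1 hi).1

theorem card_le_card_biUnion_augmentTimes
    (hI2 : ∀ A B : Finset E, A ⊆ B → Indep B → Indep A)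
    (hI3 : ∀ A B : Finset E, Indep A → Indep B → A.card < B.card →
      ∃ e ∈ B, e ∉ A ∧ Indep (insert e A))
    (hS0 : S 0 = ∅)
    (hSsucc : ∀ i < k, S (i + 1) = insert (x (i + 1)) (S i))
    (hnew : ∀ i < k, x (i + 1) ∉ S i)
    (hindep : ∀ i ≤ k, Indep (S i))
    (hmaximal : ∀ y ∉ S k, ¬ Indep (insert y (S k)))
    {A : Finset E} (hA : Indep A) :
    A.card ≤ (A.biUnion (augmentTimes Indep S k)).card := by
  set m := (A.biUnion (augmentTimes Indep S k)).card
  have hmk : m ≤ k := by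
    simpa using card_le_card (biUnion_subset.2 fun _ _ => augmentTimes_subset_range)
  have hblocked : ∀ e ∈ A, ¬ CanAugment Indep (S m) e := by
    intro e he hcan
    have hm_lt : m < k := lt_of_le_of_ne hmk fun hmk' => (hmk' ▸ hmaximal e) hcan.1 hcan.2
    have hsteps : range (m + 1) ⊆ A.biUnion (augmentTimes Indep S k) := fun i hi =>
      have him : i ≤ m := Nat.lt_succ_iff.1 (mem_range.1 hi)
      mem_biUnion.2 ⟨e, he, mem_augmentTimes.2
        ⟨by omega, hcan.anti hI2 (greedy_chain_mono hSsucc him hmk)⟩⟩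
    simpa [m] using card_le_card hsteps
  calc A.card ≤ (S m).card :=
        card_le_card_of_forall_not_canAugment hI3 hA (hindep m hmk) hblocked
    _ = m := card_greedy_chain hS0 hSsucc hnew hmk

theorem marginal_le_greedy_gain {f : Finset E → ℝ}
    (hmono : ∀ A B : Finset E, A ⊆ B → f A ≤ f B)
    (hsub : ∀ A B : Finset E, A ⊆ B → ∀ i ∉ B, f (insert i A) - f A ≥ f (insert i B) - f B)
    (hSsucc : ∀ i < k, S (i + 1) = insert (x (i + 1)) (S i))
    (hgreedy : ∀ i < k, ∀ y ∉ S i, Indep (insert y (S i)) →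
      f (insert y (S i)) - f (S i) ≤ f (insert (x (i + 1)) (S i)) - f (S i))
    {i : ℕ} (hik : i < k) {e : E} (he : CanAugment Indep (S i) e) :
    f (insert e (S k)) - f (S k) ≤ f (S (i + 1)) - f (S i) := by
  rw [hSsucc i hik]
  by_cases heS : e ∈ S k
  · rw [insert_eq_of_mem heS, sub_self, sub_nonneg]
    exact hmono _ _ (subset_insert _ _)
  · calc f (insert e (S k)) - f (S k) ≤ f (insert e (S i)) - f (S i) :=
          hsub _ _ (greedy_chain_mono hSsucc hik.le le_rfl) e heS
      _ ≤ f (insert (x (i + 1)) (S i)) - f (S i) := hgreedy i hik e he.1 he.2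

theorem sum_marginal_le_greedy_value {f : Finset E → ℝ}
    (hI2 : ∀ A B : Finset E, A ⊆ B → Indep B → Indep A)
    (hI3 : ∀ A B : Finset E, Indep A → Indep B → A.card < B.card →
      ∃ e ∈ B, e ∉ A ∧ Indep (insert e A))
    (hmono : ∀ A B : Finset E, A ⊆ B → f A ≤ f B)
    (hsub : ∀ A B : Finset E, A ⊆ B → ∀ i ∉ B, f (insert i A) - f A ≥ f (insert i B) - f B)
    (hS0 : S 0 = ∅)
    (hSsucc : ∀ i < k, S (i + 1) = insert (x (i + 1)) (S i))
    (hnew : ∀ i < k, x (i + 1) ∉ S i)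
    (hindep : ∀ i ≤ k, Indep (S i))
    (hgreedy : ∀ i < k, ∀ y ∉ S i, Indep (insert y (S i)) →
      f (insert y (S i)) - f (S i) ≤ f (insert (x (i + 1)) (S i)) - f (S i))
    (hmaximal : ∀ y ∉ S k, ¬ Indep (insert y (S k)))
    {O : Finset E} (hO : Indep O) :
    ∑ o ∈ O, (f (insert o (S k)) - f (S k)) ≤ f (S k) - f (S 0) := by
  have hhall : ∀ s : Finset O, s.card ≤ (s.biUnion fun o => augmentTimes Indep S k o).card := by
    intro s
    have hs : Indep (s.image Subtype.val) :=
      hI2 _ O (fun _ h => by obtain ⟨o, -, rfl⟩ := mem_image.1 h; exact o.2) hO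
    simpa [card_image_of_injective _ Subtype.val_injective, image_biUnion] using
      card_le_card_biUnion_augmentTimes hI2 hI3 hS0 hSsucc hnew hindep hmaximal hs
  obtain ⟨φ, hφinj, hφ⟩ := (all_card_le_biUnion_card_iff_exists_injective _).1 hhall
  have hgain_nonneg : ∀ i ∈ range k, 0 ≤ f (S (i + 1)) - f (S i) := fun i hi =>
    sub_nonneg.2 (hmono _ _ (greedy_chain_mono hSsucc i.le_succ (mem_range.1 hi)))
  calc ∑ o ∈ O, (f (insert o (S k)) - f (S k))
      = ∑ o : O, (f (insert ↑o (S k)) - f (S k)) := (sum_coe_sort O _).symm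
    _ ≤ ∑ o : O, (f (S (φ o + 1)) - f (S (φ o))) := sum_le_sum fun o _ =>
        have hφo := mem_augmentTimes.1 (hφ o)
        marginal_le_greedy_gain hmono hsub hSsucc hgreedy hφo.1 hφo.2
    _ = ∑ i ∈ univ.image φ, (f (S (i + 1)) - f (S i)) := by
        rw [sum_image fun _ _ _ _ h => hφinj h]
    _ ≤ ∑ i ∈ range k, (f (S (i + 1)) - f (S i)) :=
        sum_le_sum_of_subset_of_nonneg
          (image_subset_iff.2 fun o _ => augmentTimes_subset_range (hφ o))
          fun i hi _ => hgain_nonneg i hi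
    _ = f (S k) - f (S 0) := sum_range_sub (fun i => f (S i)) k

end GreedyChain

end

theorem greedy_matroid_half_approx_general {E : Type*} [DecidableEq E]
    (Indep : Finset E → Prop)
    (hI2 : ∀ A B : Finset E, A ⊆ B → Indep B → Indep A)
    (hI3 : ∀ A B : Finset E, Indep A → Indep B → A.card < B.card →
      ∃ e ∈ B, e ∉ A ∧ Indep (insert e A))
    (f : Finset E → ℝ)
    (hmono : ∀ A B : Finset E, A ⊆ B → f A ≤ f B)
    (hsub : ∀ A B : Finset E, A ⊆ B → ∀ i ∉ B,
      f (insert i A) - f A ≥ f (insert i B) - f B)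
    (hf0 : 0 ≤ f ∅)
    (k : ℕ) (x : ℕ → E) (S : ℕ → Finset E)
    (hS0 : S 0 = ∅)
    (hSsucc : ∀ i < k, S (i + 1) = insert (x (i + 1)) (S i))
    (hnew : ∀ i < k, x (i + 1) ∉ S i)
    (hindep : ∀ i ≤ k, Indep (S i))
    (hgreedy : ∀ i < k, ∀ y ∉ S i, Indep (insert y (S i)) →
      f (insert y (S i)) - f (S i) ≤ f (insert (x (i + 1)) (S i)) - f (S i))
    (hmaximal : ∀ y ∉ S k, ¬ Indep (insert y (S k)))
    (O : Finset E) (hO : Indep O) :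
    f (S k) ≥ (1 / 2) * f O := by
  have hcharge := sum_marginal_le_greedy_value hI2 hI3 hmono hsub hS0 hSsucc hnew hindep
    hgreedy hmaximal hO
  rw [hS0] at hcharge
  have hunion := le_add_sum_marginal_of_submodular hsub (S k) O
  have hO_le := hmono O (S k ∪ O) subset_union_right
  linarith

/-- Greedy 1/2-approximation for maximizing a monotone submodular function over a
matroid.  The independence predicate `Indep` satisfies the matroid axioms, `f` is
monotone and submodular with `f ∅ ≥ 0`, and `x 1, …, x k` is a greedy sequence with
partial solutions `S 0 = ∅`, `S (i+1) = S i ∪ {x (i+1)}`: each `S i` is independent,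
each `x (i+1)` maximizes the marginal gain among feasible additions, and `S k` is a
maximal independent set.  Then for every independent set `O`, `f (S k) ≥ f O / 2`. -/
theorem greedy_matroid_half_approx {E : Type*} [Fintype E] [DecidableEq E]
    (Indep : Finset E → Prop)
    (hI1 : Indep ∅)
    (hI2 : ∀ A B : Finset E, A ⊆ B → Indep B → Indep A)
    (hI3 : ∀ A B : Finset E, Indep A → Indep B → A.card < B.card →
      ∃ e ∈ B, e ∉ A ∧ Indep (insert e A))
    (f : Finset E → ℝ)
    (hmono : ∀ A B : Finset E, A ⊆ B → f A ≤ f B)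
    (hsub : ∀ A B : Finset E, A ⊆ B → ∀ i ∉ B,
      f (insert i A) - f A ≥ f (insert i B) - f B)
    (hf0 : 0 ≤ f ∅)
    (k : ℕ) (x : ℕ → E) (S : ℕ → Finset E)
    (hS0 : S 0 = ∅)
    (hSsucc : ∀ i < k, S (i + 1) = insert (x (i + 1)) (S i))
    (hnew : ∀ i < k, x (i + 1) ∉ S i)
    (hindep : ∀ i ≤ k, Indep (S i))
    (hgreedy : ∀ i < k, ∀ y ∉ S i, Indep (insert y (S i)) →
      f (insert y (S i)) - f (S i) ≤ f (insert (x (i + 1)) (S i)) - f (S i))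
    (hmaximal : ∀ y ∉ S k, ¬ Indep (insert y (S k)))
    (O : Finset E) (hO : Indep O) :
    f (S k) ≥ (1 / 2) * f O :=
  greedy_matroid_half_approx_general Indep hI2 hI3 f hmono hsub hf0 k x S hS0 hSsucc hnew hindep
    hgreedy hmaximal O hO
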